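/- arXiv:1605.06546 — 7 statements merged into one kernel-verified Lean document; each statement's English description precedes it below -/
import Mathlib

section
/- Let r ≥ 1 and let E be a subset of GF(2)^r \ {0} with |E| ≥ (3/4)·2^r. Then for every linear hyperplane H of GF(2)^r, the set E ∩ H spans a subspace of dimension r−1, and E itself spans GF(2)^r. -/
lemma aux_card (r : ℕ) (W : Submodule (ZMod 2) (Fin r → ZMod 2)) :
    Nat.card W = 2 ^ Module.finrank (ZMod 2) W := by
  have : Fintype W := Fintype.ofFinite W
  rw [Nat.card_eq_fintype_card, Module.card_eq_pow_finrank (K := ZMod 2), ZMod.card]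

lemma aux_cardset (r : ℕ) (W : Submodule (ZMod 2) (Fin r → ZMod 2)) :
    (W : Set (Fin r → ZMod 2)).ncard = 2 ^ Module.finrank (ZMod 2) W := by
  rw [← aux_card, ← Nat.card_coe_set_eq]; rfl

lemma aux_ncard (r : ℕ) (E : Set (Fin r → ZMod 2)) (h0 : (0:Fin r → ZMod 2) ∉ E)
    (W : Submodule (ZMod 2) (Fin r → ZMod 2)) (hEW : E ⊆ W) :
    E.ncard ≤ 2 ^ Module.finrank (ZMod 2) W - 1 := by
  have hsub : E ⊆ (W : Set _) \ {0} := fun x hx => ⟨hEW hx, by rintro rfl; exact h0 hx⟩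
  have h1 : ((W : Set (Fin r → ZMod 2)) \ {0}).ncard
      = 2 ^ Module.finrank (ZMod 2) W - 1 := by
    rw [Set.ncard_diff (by simp [Submodule.zero_mem]) (Set.toFinite _), aux_cardset]
    simp
  exact h1 ▸ Set.ncard_le_ncard hsub (Set.toFinite _)

theorem stmt_0 (r : ℕ) (hr : 1 ≤ r) (E : Set (Fin r → ZMod 2))
    (h0 : (0 : Fin r → ZMod 2) ∉ E)
    (hcard : (3/4 : ℝ) * 2^r ≤ (E.ncard : ℝ)) :
    (∀ H : Submodule (ZMod 2) (Fin r → ZMod 2),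
        Module.finrank (ZMod 2) H = r - 1 →
        Module.finrank (ZMod 2)
          (Submodule.span (ZMod 2) (E ∩ (H : Set (Fin r → ZMod 2)))) = r - 1) ∧
    Submodule.span (ZMod 2) E = ⊤ := by
  have htop : Module.finrank (ZMod 2) (Fin r → ZMod 2) = r := by simp
  have hcardV : Nat.card (Fin r → ZMod 2) = 2 ^ r := by
    simp [Nat.card_eq_fintype_card]
  constructor
  · intro H hH
    set S := Submodule.span (ZMod 2) (E ∩ (H : Set (Fin r → ZMod 2))) with hS
    have hSH : S ≤ H := Submodule.span_le.mpr Set.inter_subset_right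
    have hle : Module.finrank (ZMod 2) S ≤ r - 1 := hH ▸ Submodule.finrank_mono hSH
    rcases lt_or_eq_of_le hle with hlt | heq
    · exfalso
      have hr2 : 2 ≤ r := by omega
      obtain ⟨m, rfl⟩ : ∃ m, r = 2 + m := ⟨r - 2, by omega⟩
      set k := Module.finrank (ZMod 2) S with hk
      have hkm : k ≤ m := by omega
      have ha : (E ∩ (H : Set _)).ncard ≤ 2 ^ k - 1 :=
        aux_ncard _ _ (fun h => h0 h.1) S (fun x hx => Submodule.subset_span hx)
      have h2k : (1:ℕ) ≤ 2 ^ k := Nat.one_le_two_pow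
      have h2km : (2:ℕ) ^ k ≤ 2 ^ m := Nat.pow_le_pow_right (by norm_num) hkm
      have hcompl : (H : Set (Fin (2+m) → ZMod 2)).ncard
          + ((H : Set (Fin (2+m) → ZMod 2))ᶜ).ncard = 2 ^ (2+m) := by
        rw [Set.ncard_add_ncard_compl, hcardV]
      have hHcard : (H : Set (Fin (2+m) → ZMod 2)).ncard = 2 ^ (1+m) := by
        rw [aux_cardset, hH]; norm_num [Nat.add_comm]
      have hb : (E \ (H : Set _)).ncard ≤ ((H : Set (Fin (2+m) → ZMod 2))ᶜ).ncard :=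
        Set.ncard_le_ncard (fun x hx => hx.2) (Set.toFinite _)
      have hsplit : (E ∩ (H : Set _)).ncard + (E \ (H : Set _)).ncard = E.ncard :=
        Set.ncard_inter_add_ncard_diff_eq_ncard E _ (Set.toFinite _)
      have hp1 : (2:ℕ) ^ (1+m) = 2 * 2 ^ m := by rw [pow_add]; ring
      have hp2 : (2:ℕ) ^ (2+m) = 4 * 2 ^ m := by rw [pow_add]; ring
      have hE : E.ncard + 1 ≤ 3 * 2 ^ m := by omega
      have hreal : ((3:ℝ) * 2 ^ m) ≤ E.ncard := by
        have : ((3:ℝ)/4) * 2 ^ (2+m) = 3 * 2 ^ m := by rw [pow_add]; ring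
        linarith [hcard, this.symm.le]
      have : (E.ncard : ℝ) + 1 ≤ 3 * 2 ^ m := by exact_mod_cast hE
      linarith
    · exact heq
  · by_contra hne
    have hlt : Module.finrank (ZMod 2) (Submodule.span (ZMod 2) E) < r := by
      have h := Submodule.finrank_lt (K := ZMod 2) hne
      rwa [htop] at h
    have hle : Module.finrank (ZMod 2) (Submodule.span (ZMod 2) E) ≤ r - 1 := by omega
    have ha : E.ncard ≤ 2 ^ (r-1) - 1 := by
      refine le_trans (aux_ncard _ _ h0 _ Submodule.subset_span) ?_
      exact Nat.sub_le_sub_right (Nat.pow_le_pow_right (by norm_num) hle) 1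
    obtain ⟨m, rfl⟩ : ∃ m, r = 1 + m := ⟨r - 1, by omega⟩
    have ha' : E.ncard ≤ 2 ^ m - 1 := by simpa using ha
    have hE : E.ncard < 2 ^ m := by
      have : (1:ℕ) ≤ 2 ^ m := Nat.one_le_two_pow
      omega
    have hreal : (E.ncard : ℝ) < 2 ^ m := by exact_mod_cast hE
    have : ((3:ℝ)/4) * 2 ^ (1+m) = (3/2) * 2 ^ m := by rw [pow_add]; ring
    nlinarith [pow_pos (by norm_num : (0:ℝ) < 2) m]
end

section
/- Let n ≥ 2, let V = GF(2)^r, let E ⊆ V \ {0}, and let p ∈ E. Define E_p = {x ∈ E : x ≠ p and x + p ∈ E}. If E_p contains n linearly independent vectors v_1,…,v_n such that every nonzero GF(2)-linear combination of v_1,…,v_n lies in E_p, then E contains n+1 linearly independent vectors w_1,…,w_{n+1} such that every nonzero linear combination of them lies in E. -/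
theorem stmt_2 (n r : ℕ) (hn : 2 ≤ n) (E : Set (Fin r → ZMod 2))
    (h0 : (0 : Fin r → ZMod 2) ∉ E)
    (p : Fin r → ZMod 2) (hp : p ∈ E)
    (v : Fin n → (Fin r → ZMod 2))
    (hli : LinearIndependent (ZMod 2) v)
    (hv : ∀ c : Fin n → ZMod 2, c ≠ 0 →
      (∑ i, c i • v i) ∈ {x ∈ E | x ≠ p ∧ x + p ∈ E}) :
    ∃ w : Fin (n + 1) → (Fin r → ZMod 2),
      LinearIndependent (ZMod 2) w ∧
      ∀ c : Fin (n + 1) → ZMod 2, c ≠ 0 → (∑ i, c i • w i) ∈ E := by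
  have hpne : p ≠ 0 := fun h => h0 (h ▸ hp)
  refine ⟨Fin.snoc v p, ?_, ?_⟩
  · rw [linearIndependent_fin_snoc]
    refine ⟨hli, fun hmem => ?_⟩
    rw [Submodule.mem_span_range_iff_exists_fun] at hmem
    obtain ⟨c, hc⟩ := hmem
    by_cases hc0 : c = 0
    · subst hc0
      simp at hc
      exact hpne hc.symm
    · exact (hv c hc0).2.1 hc
  · intro c hc
    rw [Fin.sum_univ_castSucc]
    simp only [Fin.snoc_castSucc, Fin.snoc_last]
    by_cases htail : (fun i => c (Fin.castSucc i)) = 0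
    · have h1 : c (Fin.last n) ≠ 0 := by
        intro h
        apply hc
        funext i
        induction i using Fin.lastCases with
        | last => exact h
        | cast j => exact congrFun htail j
      have h1' : c (Fin.last n) = 1 := by
        have : ∀ x : ZMod 2, x ≠ 0 → x = 1 := by decide
        exact this _ h1
      have hsum : (∑ i, c (Fin.castSucc i) • v i) = 0 := by
        apply Finset.sum_eq_zero
        intro i _
        have h := congrFun htail i
        simp only [Pi.zero_apply] at h
        rw [h, zero_smul]
      rw [hsum, h1', one_smul, zero_add]
      exact hp
    · have hE := hv _ htail
      by_cases hlast : c (Fin.last n) = 0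
      · rw [hlast, zero_smul, add_zero]
        exact hE.1
      · have h1' : c (Fin.last n) = 1 := by
          have : ∀ x : ZMod 2, x ≠ 0 → x = 1 := by decide
          exact this _ hlast
        rw [h1', one_smul]
        exact hE.2.2
end

section
/- Let r ≥ n ≥ 2 and let E ⊆ GF(2)^r \ {0} be such that no n-dimensional subspace W of GF(2)^r satisfies W \ {0} ⊆ E. Then |E| ≤ (1 − 2/2^n)·2^r. -/
set_option synthInstance.maxHeartbeats 800000
set_option maxHeartbeats 1000000

open Module Submodule Set

lemma block_aux (r : ℕ) (B : Set (Fin r → ZMod 2)) :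
    ∀ n m : ℕ, m + n = r →
    (∀ W : Submodule (ZMod 2) (Fin r → ZMod 2), Module.finrank (ZMod 2) W = n →
       ∃ x ∈ W, x ≠ 0 ∧ x ∈ B) →
    2 ^ (m + 1) - 1 ≤ (B \ {0}).ncard := by
  intro n
  induction n with
  | zero =>
    intro m hm H
    obtain ⟨x, hx, hx0, -⟩ := H ⊥ (finrank_bot (ZMod 2) _)
    exact absurd ((Submodule.mem_bot _).mp hx) hx0
  | succ n ih =>
    intro m hm H
    by_cases hHn : ∀ W : Submodule (ZMod 2) (Fin r → ZMod 2), Module.finrank (ZMod 2) W = n →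
        ∃ x ∈ W, x ≠ 0 ∧ x ∈ B
    · have h1 := ih (m + 1) (by omega) hHn
      have h2 := Nat.pow_le_pow_right (by norm_num : 1 ≤ 2) (by omega : m + 1 ≤ m + 1 + 1)
      omega
    · push_neg at hHn
      obtain ⟨U, hU, hUB⟩ := hHn
      letI : Fintype ((Fin r → ZMod 2) ⧸ U) := Fintype.ofFinite _
      have hfinV : Module.finrank (ZMod 2) (Fin r → ZMod 2) = r := by
        rw [Module.finrank_fin_fun]
      have hfinQ : Module.finrank (ZMod 2) ((Fin r → ZMod 2) ⧸ U) = m + 1 := by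
        have h1 := Submodule.finrank_quotient_add_finrank U
        omega
      have hsub : ({0}ᶜ : Set ((Fin r → ZMod 2) ⧸ U)) ⊆ U.mkQ '' (B \ (U : Set (Fin r → ZMod 2))) := by
        intro w hw
        have hw0 : w ≠ 0 := hw
        set W : Submodule (ZMod 2) (Fin r → ZMod 2) := (Submodule.span (ZMod 2) {w}).comap U.mkQ with hWdef
        have hUW : U ≤ W := by
          intro x hx
          have h : U.mkQ x = 0 := (Submodule.Quotient.mk_eq_zero U).mpr hx
          simp [hWdef, Submodule.mem_comap, h]
        have hrange : LinearMap.range (U.mkQ.domRestrict W) = Submodule.span (ZMod 2) {w} := by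
          rw [LinearMap.range_domRestrict]
          exact Submodule.map_comap_eq_of_surjective (Submodule.mkQ_surjective U) _
        have hker : LinearMap.ker (U.mkQ.domRestrict W) = U.comap W.subtype := by
          rw [LinearMap.ker_domRestrict, Submodule.ker_mkQ]
        have hWrank : Module.finrank (ZMod 2) W = n + 1 := by
          have h1 := LinearMap.finrank_range_add_finrank_ker (U.mkQ.domRestrict W)
          rw [hrange, hker, finrank_span_singleton hw0,
            (Submodule.comapSubtypeEquivOfLe hUW).finrank_eq, hU] at h1
          omega
        obtain ⟨x, hxW, hx0, hxB⟩ := H W hWrank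
        have hxU : x ∉ U := fun hxU => hUB x hxU hx0 hxB
        refine ⟨x, ⟨hxB, hxU⟩, ?_⟩
        have hmem : U.mkQ x ∈ Submodule.span (ZMod 2) {w} := hxW
        obtain ⟨c, hc⟩ := Submodule.mem_span_singleton.mp hmem
        have hmk0 : U.mkQ x ≠ 0 := by
          intro h
          rw [Submodule.mkQ_apply, Submodule.Quotient.mk_eq_zero] at h
          exact hxU h
        have hc1 : c = 1 := by
          rcases (by decide : ∀ c : ZMod 2, c = 0 ∨ c = 1) c with h | h
          · exact absurd (by rw [← hc, h, zero_smul]) hmk0.symm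
          · exact h
        rw [← hc, hc1, one_smul]
      have hQcard : Nat.card ((Fin r → ZMod 2) ⧸ U) = 2 ^ (m + 1) := by
        rw [Nat.card_eq_fintype_card, card_eq_pow_finrank (K := ZMod 2), ZMod.card, hfinQ]
      have h1 : ({0}ᶜ : Set ((Fin r → ZMod 2) ⧸ U)).ncard = 2 ^ (m + 1) - 1 := by
        have h := Set.ncard_add_ncard_compl ({0} : Set ((Fin r → ZMod 2) ⧸ U))
        rw [Set.ncard_singleton, hQcard] at h
        omega
      calc 2 ^ (m + 1) - 1 = ({0}ᶜ : Set ((Fin r → ZMod 2) ⧸ U)).ncard := h1.symm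
        _ ≤ (U.mkQ '' (B \ (U : Set (Fin r → ZMod 2)))).ncard := Set.ncard_le_ncard hsub (Set.toFinite _)
        _ ≤ (B \ (U : Set (Fin r → ZMod 2))).ncard := Set.ncard_image_le (Set.toFinite _)
        _ ≤ (B \ {0}).ncard := Set.ncard_le_ncard
            (fun x ⟨hB, hU'⟩ => ⟨hB, fun h => hU' (by
              rw [Set.mem_singleton_iff] at h; rw [h]; exact U.zero_mem)⟩)
            (Set.toFinite _)

theorem stmt_3 (r n : ℕ) (hn : 2 ≤ n) (hr : n ≤ r)
    (E : Set (Fin r → ZMod 2)) (h0 : (0 : Fin r → ZMod 2) ∉ E)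
    (hfree : ¬ ∃ W : Submodule (ZMod 2) (Fin r → ZMod 2),
      Module.finrank (ZMod 2) W = n ∧ ∀ x ∈ W, x ≠ 0 → x ∈ E) :
    (E.ncard : ℝ) ≤ (1 - 2 / 2^n) * 2^r := by
  push_neg at hfree
  have key := block_aux r Eᶜ n (r - n) (by omega) (by
    intro W hW
    obtain ⟨x, hx, hx0, hxE⟩ := hfree W hW
    exact ⟨x, hx, hx0, hxE⟩)
  have hcardV : Nat.card (Fin r → ZMod 2) = 2 ^ r := by
    simp [Nat.card_eq_fintype_card, ZMod.card]
  have hdisj : Disjoint E (Eᶜ \ {0}) := Set.disjoint_left.mpr (fun x hx ⟨hx', _⟩ => hx' hx)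
  have hunion : E ∪ (Eᶜ \ {0}) ⊆ ({0}ᶜ : Set (Fin r → ZMod 2)) := by
    intro x hx
    rcases hx with hx | ⟨-, hx⟩
    · simp only [Set.mem_compl_iff, Set.mem_singleton_iff]
      exact fun h => h0 (h ▸ hx)
    · exact hx
  have h1 : E.ncard + (Eᶜ \ {0}).ncard ≤ 2 ^ r - 1 := by
    rw [← Set.ncard_union_eq hdisj (Set.toFinite _) (Set.toFinite _)]
    have h2 := Set.ncard_le_ncard hunion (Set.toFinite _)
    have h3 := Set.ncard_add_ncard_compl ({0} : Set (Fin r → ZMod 2))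
    rw [Set.ncard_singleton, hcardV] at h3
    omega
  have hEle : E.ncard ≤ 2 ^ r - 2 ^ (r - n + 1) := by omega
  have hle : 2 ^ (r - n + 1) ≤ 2 ^ r := Nat.pow_le_pow_right (by norm_num) (by omega)
  have h2n : (2 : ℝ) ^ n ≠ 0 := by positivity
  have hpow : (2 : ℝ) ^ (r - n + 1) * 2 ^ n = 2 ^ (r + 1) := by
    rw [← pow_add]; congr 1; omega
  calc (E.ncard : ℝ) ≤ ((2 ^ r - 2 ^ (r - n + 1) : ℕ) : ℝ) := by exact_mod_cast hEle
    _ = (2 : ℝ) ^ r - 2 ^ (r - n + 1) := by rw [Nat.cast_sub hle]; push_cast; ring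
    _ = (1 - 2 / 2 ^ n) * 2 ^ r := by
        have h : (2 : ℝ) ^ (r - n + 1) = 2 ^ (r + 1) / 2 ^ n := by
          rw [eq_div_iff h2n]; exact hpow
        rw [h]; field_simp; ring
end

section
/- Let r ≥ n ≥ 2 and let E ⊆ GF(2)^r \ {0} with |E| = (1 − 2/2^n)·2^r, and suppose no n-dimensional subspace W of GF(2)^r satisfies W \ {0} ⊆ E. Then there exists an (r−n)-dimensional subspace F of GF(2)^r such that E ∩ F = ∅. -/
open Module

lemma aux_exists_submodule {K V : Type*} [Field K] [AddCommGroup V] [Module K V]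
    [FiniteDimensional K V] :
    ∀ k, k ≤ Module.finrank K V → ∃ W : Submodule K V, Module.finrank K W = k := by
  intro k
  induction k with
  | zero => exact fun _ => ⟨⊥, finrank_bot K V⟩
  | succ k ih =>
    intro hk
    obtain ⟨W, hW⟩ := ih (Nat.le_of_succ_le hk)
    obtain ⟨x, hx⟩ : ∃ x, x ∉ W := by
      by_contra h
      push_neg at h
      have : W = ⊤ := eq_top_iff.2 fun v _ => h v
      rw [this, finrank_top] at hW
      omega
    have hx0 : x ≠ 0 := fun h => hx (h ▸ W.zero_mem)
    have hlt : W < W ⊔ (K ∙ x) := by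
      refine lt_of_le_of_ne le_sup_left fun h => hx ?_
      rw [h]
      exact (le_sup_right : (K ∙ x) ≤ _) (Submodule.mem_span_singleton_self x)
    refine ⟨W ⊔ (K ∙ x), le_antisymm ?_ ?_⟩
    · calc Module.finrank K ↥(W ⊔ (K ∙ x)) ≤ _ :=
        Submodule.finrank_add_le_finrank_add_finrank W (K ∙ x)
      _ ≤ k + 1 := by rw [hW, finrank_span_singleton hx0]
    · have := Submodule.finrank_lt_finrank_of_lt hlt
      omega

theorem stmt_4 (r n : ℕ) (hn : 2 ≤ n) (hr : n ≤ r)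
    (E : Set (Fin r → ZMod 2)) (h0 : (0 : Fin r → ZMod 2) ∉ E)
    (hcard : (E.ncard : ℝ) = (1 - 2 / 2^n) * 2^r)
    (hfree : ¬ ∃ W : Submodule (ZMod 2) (Fin r → ZMod 2),
      Module.finrank (ZMod 2) W = n ∧ ∀ x ∈ W, x ≠ 0 → x ∈ E) :
    ∃ F : Submodule (ZMod 2) (Fin r → ZMod 2),
      Module.finrank (ZMod 2) F = r - n ∧ E ∩ (F : Set (Fin r → ZMod 2)) = ∅ := by
  classical
  -- basic arithmetic facts about ZMod 2 vectors
  have zcases : ∀ c : ZMod 2, c = 0 ∨ c = 1 := by decide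
  have addself : ∀ v : Fin r → ZMod 2, v + v = 0 := by
    intro v
    funext i
    show v i + v i = 0
    have : ∀ a : ZMod 2, a + a = 0 := by decide
    exact this (v i)
  have negeq : ∀ v : Fin r → ZMod 2, -v = v := by
    intro v
    rw [neg_eq_iff_add_eq_zero]
    exact addself v
  have hfV : Module.finrank (ZMod 2) (Fin r → ZMod 2) = r := Module.finrank_fin_fun (ZMod 2)
  -- cardinalities
  have hcardV : Nat.card (Fin r → ZMod 2) = 2 ^ r := by
    simp [Nat.card_eq_fintype_card, ZMod.card]
  have hsub : 2 ^ (r - n + 1) ≤ 2 ^ r := Nat.pow_le_pow_right (by norm_num) (by omega)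
  have hE : E.ncard = 2 ^ r - 2 ^ (r - n + 1) := by
    have key : ((2 ^ r - 2 ^ (r - n + 1) : ℕ) : ℝ) = (1 - 2 / 2^n) * 2^r := by
      push_cast [hsub]
      have h2n : (2:ℝ)^n ≠ 0 := by positivity
      have e1 : (2:ℝ)^(r-n+1) * 2^n = 2 * 2^r := by
        rw [← pow_add, show r - n + 1 + n = r + 1 from by omega, pow_succ]; ring
      field_simp
      linear_combination (-1 : ℝ) * e1
    exact Nat.cast_injective (hcard.trans key.symm)
  have hcompl : Eᶜ.ncard = 2 ^ (r - n + 1) := by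
    have h1 := Set.ncard_add_ncard_compl E
    rw [hcardV, hE] at h1
    omega
  -- the "blocking" set B
  set B : Set (Fin r → ZMod 2) := {v | v ∉ E ∧ v ≠ 0} with hBdef
  have hBeq : B = Eᶜ \ {0} := by ext v; simp [hBdef, and_comm]
  have hBcard : B.ncard = 2 ^ (r - n + 1) - 1 := by
    rw [hBeq, Set.ncard_diff_singleton_of_mem (by simpa using h0), hcompl]
  -- key closure property
  have key : ∀ s1 s2 : Fin r → ZMod 2, s1 ∈ B → s2 ∈ B → s1 ≠ s2 → s1 + s2 ∈ B := by
    intro s1 s2 hs1 hs2 hne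
    by_contra hxB
    set x := s1 + s2 with hxdef
    have hx0 : x ≠ 0 := by
      intro h
      apply hne
      calc s1 = s1 + (s2 + s2) := by rw [addself, add_zero]
        _ = (s1 + s2) + s2 := (add_assoc s1 s2 s2).symm
        _ = s2 := by rw [← hxdef, h, zero_add]
    haveI : Finite (Submodule (ZMod 2) (Fin r → ZMod 2)) :=
      Finite.of_injective (fun M => (M : Set (Fin r → ZMod 2))) SetLike.coe_injective
    set 𝓜 : Set (Submodule (ZMod 2) (Fin r → ZMod 2)) :=
      {M : Submodule (ZMod 2) (Fin r → ZMod 2) | x ∈ M ∧ ∀ v ∈ M, v ∉ B} with h𝓜def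
    have hspan : ((ZMod 2) ∙ x) ∈ 𝓜 := by
      refine ⟨Submodule.mem_span_singleton_self x, fun v hv => ?_⟩
      obtain ⟨c, rfl⟩ := Submodule.mem_span_singleton.1 hv
      rcases zcases c with rfl | rfl
      · rw [zero_smul]; exact fun hb => hb.2 rfl
      · rw [one_smul]; exact hxB
    obtain ⟨M, hM𝓜, hMmax⟩ := Set.Finite.exists_maximalFor
      (fun M : Submodule (ZMod 2) (Fin r → ZMod 2) => Module.finrank (ZMod 2) M) 𝓜 (Set.toFinite _) ⟨_, hspan⟩
    obtain ⟨hxM, hMB⟩ := hM𝓜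
    -- rank of M is < n
    have hMlt : Module.finrank (ZMod 2) M < n := by
      by_contra h
      push_neg at h
      obtain ⟨W', hW'⟩ := aux_exists_submodule (K := ZMod 2) (V := M) n h
      refine hfree ⟨W'.map M.subtype, ?_, ?_⟩
      · rw [Submodule.finrank_map_subtype_eq]; exact hW'
      · intro v hv hv0
        have hvM : v ∈ M := Submodule.map_subtype_le M W' hv
        have := hMB v hvM
        simp only [hBdef, Set.mem_setOf_eq, not_and] at this
        by_contra hvE
        exact (this hvE) hv0
    -- every coset outside M contains a point of B
    have hcoset : ∀ v, v ∉ M → ∃ b ∈ B, b + v ∈ M := by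
      intro v hv
      by_contra hno
      push_neg at hno
      set M' := M ⊔ (ZMod 2) ∙ v with hM'def
      have hM'B : ∀ w ∈ M', w ∉ B := by
        intro w hw
        obtain ⟨m, hm, z, hz, rfl⟩ := Submodule.mem_sup.1 hw
        obtain ⟨c, rfl⟩ := Submodule.mem_span_singleton.1 hz
        rcases zcases c with rfl | rfl
        · rw [zero_smul, add_zero]; exact hMB m hm
        · rw [one_smul]
          intro hb
          refine hno _ hb ?_
          have : m + v + v = m := by rw [add_assoc, addself, add_zero]
          rw [this]; exact hm
      have hM'𝓜 : M' ∈ 𝓜 := ⟨Submodule.mem_sup_left hxM, hM'B⟩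
      have hlt : M < M' := by
        refine lt_of_le_of_ne le_sup_left fun h => hv ?_
        rw [h]
        exact Submodule.mem_sup_right (Submodule.mem_span_singleton_self v)
      have hrlt := Submodule.finrank_lt_finrank_of_lt hlt
      have : Module.finrank (ZMod 2) M' ≤ Module.finrank (ZMod 2) M := hMmax hM'𝓜 (le_of_lt hrlt)
      omega
    -- build injection from nonzero classes of the quotient into B, missing s2
    haveI : Fintype ((Fin r → ZMod 2) ⧸ M) := Fintype.ofFinite _
    have hs1B' := hs1
    have hs1M : s1 ∉ M := fun h => hMB s1 h hs1
    have hmks : (Submodule.Quotient.mk s1 : (Fin r → ZMod 2) ⧸ M) = Submodule.Quotient.mk s2 := by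
      rw [Submodule.Quotient.eq]
      have : s1 - s2 = x := by rw [sub_eq_add_neg, negeq]
      rw [this]; exact hxM
    have hmk1ne : (Submodule.Quotient.mk s1 : (Fin r → ZMod 2) ⧸ M) ≠ 0 := fun h =>
      hs1M ((Submodule.Quotient.mk_eq_zero M).1 h)
    have hP : ∀ c : (Fin r → ZMod 2) ⧸ M, c ≠ 0 → ∃ b, b ∈ B ∧ (Submodule.Quotient.mk b : (Fin r → ZMod 2) ⧸ M) = c := by
      intro c hc
      obtain ⟨v, rfl⟩ := Submodule.Quotient.mk_surjective M c
      have hvM : v ∉ M := fun h => hc (Submodule.Quotient.mk_eq_zero M |>.2 h)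
      obtain ⟨b, hb, hbv⟩ := hcoset v hvM
      refine ⟨b, hb, ?_⟩
      rw [Submodule.Quotient.eq]
      have : b - v = b + v := by rw [sub_eq_add_neg, negeq]
      rw [this]; exact hbv
    set f : {c : (Fin r → ZMod 2) ⧸ M // c ≠ 0} → B := fun c =>
      if hc : (c : (Fin r → ZMod 2) ⧸ M) = Submodule.Quotient.mk s1 then ⟨s1, hs1⟩
      else ⟨(hP c.1 c.2).choose, (hP c.1 c.2).choose_spec.1⟩ with hfdef
    have hfmk : ∀ c : {c : (Fin r → ZMod 2) ⧸ M // c ≠ 0}, (Submodule.Quotient.mk (f c : Fin r → ZMod 2) : (Fin r → ZMod 2) ⧸ M) = c := by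
      intro c
      rw [hfdef]
      by_cases hc : (c : (Fin r → ZMod 2) ⧸ M) = Submodule.Quotient.mk s1
      · simp only [hc, dif_pos]
      · simp only [hc, dif_neg, not_false_iff]
        exact (hP c.1 c.2).choose_spec.2
    have hfinj : Function.Injective f := by
      intro c1 c2 h
      have := congrArg (fun b : B => (Submodule.Quotient.mk (b : Fin r → ZMod 2) : (Fin r → ZMod 2) ⧸ M)) h
      simp only [hfmk] at this
      exact Subtype.ext this
    have hs2B : s2 ∈ B := hs2
    have hs2nr : (⟨s2, hs2B⟩ : B) ∉ Set.range f := by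
      rintro ⟨c, hc⟩
      have hmk : (Submodule.Quotient.mk s2 : (Fin r → ZMod 2) ⧸ M) = c := by
        rw [← hfmk c, hc]
      by_cases h' : (c : (Fin r → ZMod 2) ⧸ M) = Submodule.Quotient.mk s1
      · rw [hfdef] at hc
        simp only [h', dif_pos] at hc
        exact hne (congrArg Subtype.val hc)
      · exact h' (by rw [← hmk, hmks])
    have hcardlt : Fintype.card {c : (Fin r → ZMod 2) ⧸ M // c ≠ 0} < Fintype.card B :=
      Fintype.card_lt_of_injective_of_notMem f hfinj hs2nr
    -- now count
    have hQcard : Fintype.card ((Fin r → ZMod 2) ⧸ M) = 2 ^ (r - Module.finrank (ZMod 2) M) := by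
      have h1 : Fintype.card ((Fin r → ZMod 2) ⧸ M) = Fintype.card (ZMod 2) ^ Module.finrank (ZMod 2) ((Fin r → ZMod 2) ⧸ M) :=
        Module.card_eq_pow_finrank (K := ZMod 2)
      have h2 := Submodule.finrank_quotient_add_finrank M
      rw [hfV] at h2
      rw [h1, ZMod.card]
      congr 1
      omega
    have hsubcard : Fintype.card {c : (Fin r → ZMod 2) ⧸ M // c ≠ 0} = Fintype.card ((Fin r → ZMod 2) ⧸ M) - 1 := by
      simp only [← Set.card_ne_eq (0 : (Fin r → ZMod 2) ⧸ M)]; rfl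
    have hBfin : Fintype.card B = 2 ^ (r - n + 1) - 1 := by
      rw [← Nat.card_eq_fintype_card, Nat.card_coe_set_eq, hBcard]
    have hge : 2 ^ (r - n + 1) ≤ 2 ^ (r - Module.finrank (ZMod 2) M) :=
      Nat.pow_le_pow_right (by norm_num) (by omega)
    rw [hsubcard, hQcard, hBfin] at hcardlt
    exact lt_irrefl _ (lt_of_le_of_lt (Nat.sub_le_sub_right hge 1) hcardlt)
  -- build the submodule S' with carrier Eᶜ
  set S' : Submodule (ZMod 2) (Fin r → ZMod 2) :=
    { carrier := Eᶜ
      zero_mem' := h0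
      add_mem' := by
        intro a b ha hb
        by_cases ha0 : a = 0
        · rw [ha0, zero_add]; exact hb
        by_cases hb0 : b = 0
        · rw [hb0, add_zero]; exact ha
        by_cases hab : a = b
        · rw [hab, addself]; exact h0
        · exact (key a b ⟨ha, ha0⟩ ⟨hb, hb0⟩ hab).1
      smul_mem' := by
        intro c v hv
        rcases zcases c with rfl | rfl
        · rw [zero_smul]; exact h0
        · rw [one_smul]; exact hv } with hS'def
  have hS'coe : (S' : Set (Fin r → ZMod 2)) = Eᶜ := rfl
  have hS'card : Nat.card S' = 2 ^ (r - n + 1) := by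
    rw [← Nat.card_coe_set_eq] at hcompl
    exact hcompl
  have hS'rank : Module.finrank (ZMod 2) S' = r - n + 1 := by
    haveI : Fintype S' := Fintype.ofFinite _
    have h1 : Fintype.card S' = Fintype.card (ZMod 2) ^ Module.finrank (ZMod 2) S' :=
      Module.card_eq_pow_finrank (K := ZMod 2)
    rw [← Nat.card_eq_fintype_card, hS'card, ZMod.card] at h1
    exact (Nat.pow_right_injective (le_refl 2) h1).symm
  obtain ⟨F', hF'⟩ := aux_exists_submodule (K := ZMod 2) (V := S') (r - n)
    (by rw [hS'rank]; omega)
  refine ⟨F'.map S'.subtype, ?_, ?_⟩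
  · rw [Submodule.finrank_map_subtype_eq]; exact hF'
  · rw [Set.eq_empty_iff_forall_notMem]
    rintro v ⟨hvE, hvF⟩
    exact Submodule.map_subtype_le S' F' hvF hvE
end

section
/- Let r ≥ n ≥ 3, let V = GF(2)^r, and let E ⊆ V \ {0} be PG(n−1,2)-free (no n-dimensional subspace has all its nonzero vectors in E). Suppose H is a linear hyperplane of V such that E ∩ H contains all nonzero vectors of some (n−1)-dimensional subspace S ⊆ H. Then |E \ H| ≤ (1 − 1/2^{n−1})·2^{r−1}. -/
theorem stmt_5 (r n : ℕ) (hn : 3 ≤ n) (hr : n ≤ r)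
    (E : Set (Fin r → ZMod 2)) (h0 : (0 : Fin r → ZMod 2) ∉ E)
    (hfree : ¬ ∃ W : Submodule (ZMod 2) (Fin r → ZMod 2),
      Module.finrank (ZMod 2) W = n ∧ ∀ x ∈ W, x ≠ 0 → x ∈ E)
    (H : Submodule (ZMod 2) (Fin r → ZMod 2))
    (hH : Module.finrank (ZMod 2) H = r - 1)
    (S : Submodule (ZMod 2) (Fin r → ZMod 2)) (hSH : S ≤ H)
    (hS : Module.finrank (ZMod 2) S = n - 1)
    (hSE : ∀ x ∈ S, x ≠ 0 → x ∈ E) :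
    ((E \ (H : Set (Fin r → ZMod 2))).ncard : ℝ) ≤ (1 - 1 / 2^(n-1)) * 2^(r-1) := by
  classical
  haveI : Fintype ((Fin r → ZMod 2) ⧸ S) := Fintype.ofFinite _
  set π : (Fin r → ZMod 2) →ₗ[ZMod 2] (Fin r → ZMod 2) ⧸ S := S.mkQ with hπ
  -- basic cardinalities
  have cardV : Fintype.card (Fin r → ZMod 2) = 2 ^ r := by
    simp [ZMod.card]
  have cardS : Fintype.card S = 2 ^ (n-1) := by
    rw [Module.card_eq_pow_finrank (K := ZMod 2), ZMod.card, hS]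
  have cardH : Fintype.card H = 2 ^ (r-1) := by
    rw [Module.card_eq_pow_finrank (K := ZMod 2), ZMod.card, hH]
  -- fibers of π
  have hfib : ∀ x y : Fin r → ZMod 2, π y = π x ↔ y - x ∈ S := by
    intro x y
    exact Submodule.Quotient.eq S
  have fullfib : ∀ x : Fin r → ZMod 2,
      (Finset.univ.filter (fun y => π y = π x)).card = 2 ^ (n-1) := by
    intro x
    have himg : (Finset.univ.filter (fun y => π y = π x)) =
        Finset.image (fun s : S => x + (s : Fin r → ZMod 2)) Finset.univ := by
      ext y
      simp only [Finset.mem_filter, Finset.mem_univ, true_and, Finset.mem_image]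
      rw [hfib]
      constructor
      · intro h; exact ⟨⟨y - x, h⟩, by rw [add_comm, sub_add_cancel]⟩
      · rintro ⟨s, rfl⟩
        have := s.2
        simpa using this
    rw [himg, Finset.card_image_of_injective _
      (fun a b hab => Subtype.ext (add_left_cancel hab)), Finset.card_univ, cardS]
  -- the set A = E \ H as a finset
  set A : Finset (Fin r → ZMod 2) := Finset.univ.filter (fun x => x ∈ E ∧ x ∉ H) with hA
  have hAcard : (E \ (H : Set (Fin r → ZMod 2))).ncard = A.card := by
    rw [Set.ncard_eq_toFinset_card']
    congr 1
    ext x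
    simp [A, Set.mem_diff]
  -- key fiber bound
  have hzc : ∀ c : ZMod 2, c = 0 ∨ c = 1 := by decide
  have fibbound : ∀ q : (Fin r → ZMod 2) ⧸ S,
      (A.filter (fun x => π x = q)).card ≤ 2 ^ (n-1) - 1 := by
    intro q
    rcases (A.filter (fun x => π x = q)).eq_empty_or_nonempty with he | ⟨x, hx⟩
    · simp [he]
    · simp only [Finset.mem_filter, hA, Finset.mem_univ, true_and] at hx
      obtain ⟨⟨hxE, hxH⟩, hxq⟩ := hx
      have hsub : A.filter (fun x => π x = q) ⊆
          Finset.univ.filter (fun y => π y = π x) := by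
        intro y hy
        simp only [Finset.mem_filter] at hy ⊢
        exact ⟨Finset.mem_univ y, hy.2.trans hxq.symm⟩
      have hle : (A.filter (fun x => π x = q)).card ≤ 2 ^ (n-1) := by
        rw [← fullfib x]; exact Finset.card_le_card hsub
      rcases lt_or_eq_of_le hle with h | h
      · omega
      -- equality case: full coset in E, contradiction
      exfalso
      have heq : A.filter (fun x => π x = q) =
          Finset.univ.filter (fun y => π y = π x) := by
        apply Finset.eq_of_subset_of_card_le hsub
        rw [fullfib x, h]
      have hxS : x ∉ S := fun h => hxH (hSH h)
      have hx0 : x ≠ 0 := fun h => hxH (h ▸ H.zero_mem)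
      have hcoset : ∀ y : Fin r → ZMod 2, y - x ∈ S → y ∈ E := by
        intro y hy
        have hmem : y ∈ Finset.univ.filter (fun y => π y = π x) := by
          simp only [Finset.mem_filter, Finset.mem_univ, true_and]
          exact (hfib x y).mpr hy
        rw [← heq] at hmem
        simp only [Finset.mem_filter, hA, Finset.mem_univ, true_and] at hmem
        exact hmem.1.1
      apply hfree
      refine ⟨S ⊔ Submodule.span (ZMod 2) {x}, ?_, ?_⟩
      · have hinf : S ⊓ Submodule.span (ZMod 2) {x} = ⊥ := by
          rw [eq_bot_iff]
          intro y hy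
          obtain ⟨hyS, hyx⟩ := Submodule.mem_inf.mp hy
          rw [Submodule.mem_span_singleton] at hyx
          obtain ⟨c, rfl⟩ := hyx
          rcases hzc c with rfl | rfl
          · simp
          · exfalso; apply hxS; simpa using hyS
        have hd := Submodule.finrank_sup_add_finrank_inf_eq S (Submodule.span (ZMod 2) {x})
        rw [hinf, finrank_bot, hS, finrank_span_singleton hx0] at hd
        omega
      · intro w hw hw0
        rw [Submodule.mem_sup] at hw
        obtain ⟨s, hs, z, hz, rfl⟩ := hw
        rw [Submodule.mem_span_singleton] at hz
        obtain ⟨c, rfl⟩ := hz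
        rcases hzc c with rfl | rfl
        · simp only [zero_smul, add_zero]
          exact hSE _ hs (by simpa using hw0)
        · rw [one_smul]
          apply hcoset
          simpa using hs
  -- the image finset t
  set t : Finset ((Fin r → ZMod 2) ⧸ S) :=
    Finset.image π (Finset.univ.filter (fun x : Fin r → ZMod 2 => x ∉ H)) with ht
  have hmap : ∀ x ∈ A, π x ∈ t := by
    intro x hx
    simp only [hA, Finset.mem_filter, Finset.mem_univ, true_and] at hx
    exact Finset.mem_image_of_mem π (by simp [hx.2])
  -- count A
  have hAsum : A.card = ∑ q ∈ t, (A.filter (fun x => π x = q)).card :=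
    Finset.card_eq_sum_card_fiberwise hmap
  have hAle : A.card ≤ t.card * (2 ^ (n-1) - 1) := by
    rw [hAsum]
    calc ∑ q ∈ t, (A.filter (fun x => π x = q)).card
        ≤ ∑ _q ∈ t, (2 ^ (n-1) - 1) := Finset.sum_le_sum (fun q _ => fibbound q)
      _ = t.card * (2 ^ (n-1) - 1) := by rw [Finset.sum_const, smul_eq_mul]
  -- count t
  have hcompl : (Finset.univ.filter (fun x : Fin r → ZMod 2 => x ∉ H)).card = 2 ^ (r-1) := by
    have h1 := Finset.card_filter_add_card_filter_not (s := Finset.univ)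
      (p := fun x : Fin r → ZMod 2 => x ∈ H)
    have h2 : (Finset.univ.filter (fun x : Fin r → ZMod 2 => x ∈ H)).card = 2 ^ (r-1) := by
      rw [← cardH, Fintype.card_subtype]
    rw [Finset.card_univ, cardV] at h1
    have h3 : 2 ^ r = 2 ^ (r-1) * 2 := by
      rw [← pow_succ]; congr 1; omega
    omega
  have htsum : (Finset.univ.filter (fun x : Fin r → ZMod 2 => x ∉ H)).card
      = ∑ q ∈ t, ((Finset.univ.filter (fun x : Fin r → ZMod 2 => x ∉ H)).filter
        (fun x => π x = q)).card :=
    Finset.card_eq_sum_card_fiberwise (fun x hx => Finset.mem_image_of_mem π hx)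
  have hfib2 : ∀ q ∈ t, ((Finset.univ.filter (fun x : Fin r → ZMod 2 => x ∉ H)).filter
      (fun x => π x = q)).card = 2 ^ (n-1) := by
    intro q hq
    simp only [ht, Finset.mem_image, Finset.mem_filter, Finset.mem_univ, true_and] at hq
    obtain ⟨x, hxH, rfl⟩ := hq
    rw [← fullfib x]
    congr 1
    ext y
    simp only [Finset.mem_filter, Finset.mem_univ, true_and, and_iff_right_iff_imp]
    intro hy hyH
    apply hxH
    have h1 : y - x ∈ S := (hfib x y).mp hy
    have h2 : y - (y - x) ∈ H := H.sub_mem hyH (hSH h1)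
    simpa using h2
  have htcard : t.card * 2 ^ (n-1) = 2 ^ (r-1) := by
    rw [← hcompl, htsum, Finset.sum_congr rfl hfib2, Finset.sum_const, smul_eq_mul]
  have htc : t.card = 2 ^ (r-n) := by
    have hpow : 2 ^ (r-n) * 2 ^ (n-1) = 2 ^ (r-1) := by
      rw [← pow_add]; congr 1; omega
    have h2 : (0:ℕ) < 2 ^ (n-1) := Nat.pow_pos (by norm_num)
    exact Nat.eq_of_mul_eq_mul_right h2 (by omega)
  -- conclude
  have hfinal : A.card ≤ 2 ^ (r-n) * (2 ^ (n-1) - 1) := by rw [← htc]; exact hAle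
  rw [hAcard]
  have h1 : (1 : ℕ) ≤ 2 ^ (n-1) := Nat.one_le_two_pow
  calc (A.card : ℝ) ≤ ((2 ^ (r-n) * (2 ^ (n-1) - 1) : ℕ) : ℝ) := by exact_mod_cast hfinal
    _ = 2 ^ (r-n) * (2 ^ (n-1) - 1) := by
        push_cast [h1]; ring
    _ = (1 - 1 / 2^(n-1)) * 2^(r-1) := by
        have hpow : (2:ℝ) ^ (r-1) = 2 ^ (r-n) * 2 ^ (n-1) := by
          rw [← pow_add]; congr 1; omega
        rw [hpow]
        have h2 : (2:ℝ) ^ (n-1) ≠ 0 := by positivity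
        field_simp
end

section
/- Let r ≥ 1, ε > 0, V = GF(2)^r, and let E ⊆ V \ {0} be ε-uniform, meaning that for every linear hyperplane H of V one has (1/2)(|E| − ε·2^r) ≤ |E ∩ (H \ {0})| ≤ (1/2)(|E| + ε·2^r). Set α = |E|/2^r and let T_E = |{(x,y,z) ∈ E^3 : x + y + z = 0}|. Then |T_E − α^3·2^{2r}| ≤ ε(α − α^2)·2^{2r}. -/
open Finset

noncomputable section GreenAux

def ddG {r : ℕ} (γ x : Fin r → ZMod 2) : ZMod 2 := ∑ i, γ i * x i

def eeG (a : ZMod 2) : ℝ := if a = 0 then 1 else -1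

lemma zmod2_cases (a : ZMod 2) : a = 0 ∨ a = 1 := by revert a; decide

lemma eeG_zero : eeG 0 = 1 := by simp [eeG]

lemma eeG_one : eeG 1 = -1 := by simp [eeG]

lemma eeG_add (a b : ZMod 2) : eeG (a + b) = eeG a * eeG b := by
  have h11 : (1 : ZMod 2) + 1 = 0 := by decide
  rcases zmod2_cases a with ha | ha <;> rcases zmod2_cases b with hb | hb <;>
      subst ha <;> subst hb <;> simp only [add_zero, zero_add, h11, eeG_zero, eeG_one] <;> ring

lemma eeG_sq (a : ZMod 2) : eeG a * eeG a = 1 := by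
  rcases zmod2_cases a with ha | ha <;> subst ha <;> simp [eeG]

lemma eeG_abs (a : ZMod 2) : |eeG a| ≤ 1 := by
  rcases zmod2_cases a with ha | ha <;> subst ha <;> simp [eeG]

lemma ddG_add_right {r : ℕ} (γ x y : Fin r → ZMod 2) :
    ddG γ (x + y) = ddG γ x + ddG γ y := by
  simp [ddG, mul_add, Finset.sum_add_distrib]

lemma ddG_zero_left {r : ℕ} (x : Fin r → ZMod 2) : ddG 0 x = 0 := by
  simp [ddG]

lemma card_V (r : ℕ) : Fintype.card (Fin r → ZMod 2) = 2 ^ r := by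
  simp [Fintype.card_pi]

lemma char_sum {r : ℕ} (x : Fin r → ZMod 2) (hx : x ≠ 0) :
    ∑ γ : Fin r → ZMod 2, eeG (ddG γ x) = 0 := by
  obtain ⟨i, hi⟩ : ∃ i, x i ≠ 0 := by
    by_contra h; push_neg at h; exact hx (funext h)
  have hxi : x i = 1 := (zmod2_cases (x i)).resolve_left hi
  set δ : Fin r → ZMod 2 := Pi.single i 1 with hδ
  have hdd : ddG δ x = 1 := by
    simp [ddG, hδ, Pi.single_apply, Finset.sum_ite_eq', hxi]
  have key : ∑ γ : Fin r → ZMod 2, eeG (ddG (γ + δ) x)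
      = ∑ γ : Fin r → ZMod 2, eeG (ddG γ x) :=
    Fintype.sum_equiv (Equiv.addRight δ) _ _ (fun γ => rfl)
  have h2 : ∀ γ : Fin r → ZMod 2, ddG (γ + δ) x = ddG γ x + 1 := by
    intro γ
    have : ddG (γ + δ) x = ddG γ x + ddG δ x := by
      simp [ddG, add_mul, Finset.sum_add_distrib]
    rw [this, hdd]
  have : ∑ γ : Fin r → ZMod 2, eeG (ddG γ x)
      = - ∑ γ : Fin r → ZMod 2, eeG (ddG γ x) := by
    conv_lhs => rw [← key]
    simp only [h2, eeG_add, eeG_one]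
    rw [← Finset.sum_neg_distrib]
    ring_nf
  linarith

lemma char_sum_full {r : ℕ} (x : Fin r → ZMod 2) :
    ∑ γ : Fin r → ZMod 2, eeG (ddG γ x) = if x = 0 then (2:ℝ)^r else 0 := by
  by_cases hx : x = 0
  · subst hx
    have : ∀ γ : Fin r → ZMod 2, ddG γ 0 = 0 := by intro γ; simp [ddG]
    simp [this, eeG_zero, card_V]
  · simp [hx, char_sum x hx]

lemma sum_cube {β : Type*} (s : Finset β) (a : β → ℝ) :
    ∑ x ∈ s, ∑ y ∈ s, ∑ z ∈ s, a x * a y * a z = (∑ x ∈ s, a x) ^ 3 := by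
  simp only [pow_succ, pow_zero, one_mul, Finset.sum_mul_sum, Finset.sum_mul, Finset.mul_sum]
  refine Finset.sum_congr rfl fun x _ => ?_
  rw [Finset.sum_comm]
  refine Finset.sum_congr rfl fun y _ => Finset.sum_congr rfl fun z _ => by ring

def phiG {r : ℕ} (γ : Fin r → ZMod 2) : (Fin r → ZMod 2) →ₗ[ZMod 2] ZMod 2 where
  toFun x := ddG γ x
  map_add' x y := ddG_add_right γ x y
  map_smul' c x := by simp [ddG, Finset.mul_sum]; ring_nf; simp [mul_comm, mul_assoc, mul_left_comm]

lemma finrank_ker {r : ℕ} (hr : 1 ≤ r) (γ : Fin r → ZMod 2) (hγ : γ ≠ 0) :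
    Module.finrank (ZMod 2) (LinearMap.ker (phiG γ)) = r - 1 := by
  obtain ⟨i, hi⟩ : ∃ i, γ i ≠ 0 := by
    by_contra h; push_neg at h; exact hγ (funext h)
  have hγi : γ i = 1 := (zmod2_cases (γ i)).resolve_left hi
  have hsurj : Function.Surjective (phiG γ) := by
    intro c
    refine ⟨Pi.single i c, ?_⟩
    simp [phiG, ddG, Pi.single_apply, Finset.sum_ite_eq', hγi]
  have hrange : LinearMap.range (phiG γ) = ⊤ := LinearMap.range_eq_top.mpr hsurj
  have hrn := LinearMap.finrank_range_add_finrank_ker (phiG γ)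
  rw [hrange] at hrn
  have h1 : Module.finrank (ZMod 2) (⊤ : Submodule (ZMod 2) (ZMod 2)) = 1 := by
    simp [finrank_top]
  have h2 : Module.finrank (ZMod 2) (Fin r → ZMod 2) = r := by
    simp [Module.finrank_pi]
  omega

end GreenAux

theorem stmt_9 (r : ℕ) (hr : 1 ≤ r) (ε : ℝ) (hε : 0 < ε)
    (E : Set (Fin r → ZMod 2)) (h0 : (0 : Fin r → ZMod 2) ∉ E)
    (hunif : ∀ H : Submodule (ZMod 2) (Fin r → ZMod 2),
      Module.finrank (ZMod 2) H = r - 1 →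
      (1/2 : ℝ) * ((E.ncard : ℝ) - ε * 2^r) ≤
        ((E ∩ ((H : Set (Fin r → ZMod 2)) \ {0})).ncard : ℝ) ∧
      ((E ∩ ((H : Set (Fin r → ZMod 2)) \ {0})).ncard : ℝ) ≤
        (1/2 : ℝ) * ((E.ncard : ℝ) + ε * 2^r))
    (α : ℝ) (hα : α = (E.ncard : ℝ) / 2^r)
    (T : ℝ)
    (hT : T = (({t : (Fin r → ZMod 2) × (Fin r → ZMod 2) × (Fin r → ZMod 2) |
        t.1 ∈ E ∧ t.2.1 ∈ E ∧ t.2.2 ∈ E ∧ t.1 + t.2.1 + t.2.2 = 0}).ncard : ℝ)) :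
    |T - α^3 * 2^(2*r)| ≤ ε * (α - α^2) * 2^(2*r) := by
  classical
  have hEfin : E.Finite := Set.toFinite E
  set Ef : Finset (Fin r → ZMod 2) := hEfin.toFinset with hEfdef
  have hmem : ∀ x, x ∈ Ef ↔ x ∈ E := fun x => hEfin.mem_toFinset
  have hNcard : (E.ncard : ℝ) = (Ef.card : ℝ) := by
    rw [Set.ncard_eq_toFinset_card _ hEfin]
  set N : ℝ := (Ef.card : ℝ) with hNdef
  have hN0 : 0 ≤ N := Nat.cast_nonneg _
  set F : (Fin r → ZMod 2) → ℝ := fun γ => ∑ x ∈ Ef, eeG (ddG γ x) with hFdef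
  have hpow : (0:ℝ) < 2 ^ r := by positivity
  -- T as a triple sum
  have hTsum : T = ∑ x ∈ Ef, ∑ y ∈ Ef, ∑ z ∈ Ef, (if x + y + z = 0 then (1:ℝ) else 0) := by
    rw [hT]
    have hset : {t : (Fin r → ZMod 2) × (Fin r → ZMod 2) × (Fin r → ZMod 2) |
        t.1 ∈ E ∧ t.2.1 ∈ E ∧ t.2.2 ∈ E ∧ t.1 + t.2.1 + t.2.2 = 0}
        = ↑((Ef ×ˢ (Ef ×ˢ Ef)).filter fun t => t.1 + t.2.1 + t.2.2 = 0) := by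
      ext t
      simp [hmem, Finset.mem_filter, and_assoc]
    rw [hset, Set.ncard_coe_finset, Finset.card_filter]
    push_cast
    rw [Finset.sum_product]
    refine Finset.sum_congr rfl fun x _ => ?_
    rw [Finset.sum_product]
  -- Fourier expansion of T
  have hTF : T = (2^r : ℝ)⁻¹ * ∑ γ : Fin r → ZMod 2, (F γ)^3 := by
    rw [hTsum]
    have key : ∀ x y z : Fin r → ZMod 2,
        (if x + y + z = 0 then (1:ℝ) else 0)
        = (2^r : ℝ)⁻¹ * ∑ γ : Fin r → ZMod 2,
            eeG (ddG γ x) * eeG (ddG γ y) * eeG (ddG γ z) := by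
      intro x y z
      have : ∀ γ : Fin r → ZMod 2, eeG (ddG γ x) * eeG (ddG γ y) * eeG (ddG γ z)
          = eeG (ddG γ (x + y + z)) := by
        intro γ
        rw [ddG_add_right, ddG_add_right, eeG_add, eeG_add]
      simp only [this, char_sum_full]
      by_cases h : x + y + z = 0 <;> simp [h] <;> field_simp
    simp only [key, ← Finset.mul_sum]
    congr 1
    have step1 : ∀ x y : Fin r → ZMod 2,
        ∑ z ∈ Ef, ∑ γ : Fin r → ZMod 2, eeG (ddG γ x) * eeG (ddG γ y) * eeG (ddG γ z)
        = ∑ γ : Fin r → ZMod 2, ∑ z ∈ Ef, eeG (ddG γ x) * eeG (ddG γ y) * eeG (ddG γ z) :=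
      fun x y => Finset.sum_comm
    simp only [step1]
    have step2 : ∀ x : Fin r → ZMod 2,
        ∑ y ∈ Ef, ∑ γ : Fin r → ZMod 2, ∑ z ∈ Ef, eeG (ddG γ x) * eeG (ddG γ y) * eeG (ddG γ z)
        = ∑ γ : Fin r → ZMod 2, ∑ y ∈ Ef, ∑ z ∈ Ef, eeG (ddG γ x) * eeG (ddG γ y) * eeG (ddG γ z) :=
      fun x => Finset.sum_comm
    simp only [step2]
    rw [Finset.sum_comm]
    refine Finset.sum_congr rfl fun γ _ => ?_
    exact sum_cube Ef (fun x => eeG (ddG γ x))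
  -- F at 0
  have hF0 : F 0 = N := by
    simp [hFdef, ddG_zero_left, eeG_zero, hNdef]
  -- Parseval
  have hPar : ∑ γ : Fin r → ZMod 2, (F γ)^2 = 2^r * N := by
    have expand : ∀ γ : Fin r → ZMod 2, (F γ)^2
        = ∑ x ∈ Ef, ∑ y ∈ Ef, eeG (ddG γ (x + y)) := by
      intro γ
      have : ∀ x y : Fin r → ZMod 2, eeG (ddG γ (x + y)) = eeG (ddG γ x) * eeG (ddG γ y) := by
        intro x y; rw [ddG_add_right, eeG_add]
      simp only [this, hFdef]
      rw [pow_two, Finset.sum_mul_sum]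
    simp only [expand]
    have sw : ∑ γ : Fin r → ZMod 2, ∑ x ∈ Ef, ∑ y ∈ Ef, eeG (ddG γ (x + y))
        = ∑ x ∈ Ef, ∑ y ∈ Ef, ∑ γ : Fin r → ZMod 2, eeG (ddG γ (x + y)) := by
      rw [Finset.sum_comm]
      refine Finset.sum_congr rfl fun x _ => Finset.sum_comm
    rw [sw]
    have inner : ∀ x ∈ Ef, ∑ y ∈ Ef, ∑ γ : Fin r → ZMod 2, eeG (ddG γ (x + y)) = 2^r := by
      intro x hx
      have hself : ∀ w : Fin r → ZMod 2, w + w = 0 := by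
        intro w; funext i
        have h2 : ∀ a : ZMod 2, a + a = 0 := by decide
        exact h2 (w i)
      have : ∀ y : Fin r → ZMod 2, x + y = 0 ↔ y = x := by
        intro y
        constructor
        · intro h
          calc y = x + (x + y) := by rw [← add_assoc, hself, zero_add]
            _ = x := by rw [h, add_zero]
        · intro h; rw [h]; exact hself x
      simp only [char_sum_full, this]
      rw [Finset.sum_ite_eq' Ef x (fun _ => (2:ℝ)^r)]
      simp [hx]
    rw [Finset.sum_congr rfl inner, Finset.sum_const, nsmul_eq_mul]
    ring
  -- uniformity bound on nonzero Fourier coefficients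
  have hFb : ∀ γ : Fin r → ZMod 2, γ ≠ 0 → |F γ| ≤ ε * 2^r := by
    intro γ hγ
    set k : ℝ := ((Ef.filter fun x => ddG γ x = 0).card : ℝ) with hkdef
    have hH := hunif (LinearMap.ker (phiG γ)) (finrank_ker hr γ hγ)
    have hsetH : E ∩ ((LinearMap.ker (phiG γ) : Set (Fin r → ZMod 2)) \ {0})
        = ↑(Ef.filter fun x => ddG γ x = 0) := by
      ext z
      simp only [Set.mem_inter_iff, Set.mem_diff, SetLike.mem_coe, LinearMap.mem_ker,
        Set.mem_singleton_iff, Finset.coe_filter, Set.mem_setOf_eq, hmem]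
      constructor
      · rintro ⟨hz, hz2, _⟩; exact ⟨hz, hz2⟩
      · rintro ⟨hz, hz2⟩
        exact ⟨hz, hz2, fun h => h0 (h ▸ hz)⟩
    rw [hsetH, Set.ncard_coe_finset, ← hkdef, hNcard] at hH
    have hFk : F γ = 2 * k - N := by
      rw [hFdef]
      simp only
      rw [← Finset.sum_filter_add_sum_filter_not Ef (fun x => ddG γ x = 0)]
      have c1 : ∑ x ∈ Ef.filter (fun x => ddG γ x = 0), eeG (ddG γ x) = k := by
        rw [Finset.sum_congr rfl (fun x hx => by
          rw [(Finset.mem_filter.mp hx).2, eeG_zero]), Finset.sum_const, nsmul_eq_mul, mul_one]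
      have c2 : ∑ x ∈ Ef.filter (fun x => ¬ ddG γ x = 0), eeG (ddG γ x) = -(N - k) := by
        rw [Finset.sum_congr rfl (fun x hx => by
          have h1 : ddG γ x = 1 := (zmod2_cases _).resolve_left (Finset.mem_filter.mp hx).2
          rw [h1, eeG_one]), Finset.sum_const, nsmul_eq_mul, mul_neg_one]
        have htot := Finset.card_filter_add_card_filter_not (s := Ef)
          (p := fun x => ddG γ x = 0)
        have htot' : k + ((Ef.filter fun x => ¬ ddG γ x = 0).card : ℝ) = N := by
          rw [hkdef, hNdef]
          exact_mod_cast htot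
        linarith
      rw [c1, c2]; ring
    rw [hFk, abs_le]
    constructor <;> linarith [hH.1, hH.2]
  -- split off the zero frequency
  have hsplit : ∀ g : (Fin r → ZMod 2) → ℝ,
      ∑ γ : Fin r → ZMod 2, g γ
      = g 0 + ∑ γ ∈ Finset.univ.erase (0 : Fin r → ZMod 2), g γ :=
    fun g => (Finset.add_sum_erase _ g (Finset.mem_univ 0)).symm
  -- nonzero part of Parseval
  have hPar' : ∑ γ ∈ Finset.univ.erase (0 : Fin r → ZMod 2), (F γ)^2 = 2^r * N - N^2 := by
    have := hsplit (fun γ => (F γ)^2)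
    rw [hPar, hF0] at this
    linarith
  -- rewrite goal quantities
  have hαN : α = N / 2^r := by rw [hα, hNcard]
  have h2r : (2:ℝ)^(2*r) = 2^r * 2^r := by rw [two_mul, pow_add]
  have hcube : α^3 * 2^(2*r) = (2^r : ℝ)⁻¹ * (F 0)^3 := by
    rw [hαN, hF0, h2r]; field_simp
  have hdiff : T - α^3 * 2^(2*r)
      = (2^r : ℝ)⁻¹ * ∑ γ ∈ Finset.univ.erase (0 : Fin r → ZMod 2), (F γ)^3 := by
    rw [hTF, hcube, hsplit (fun γ => (F γ)^3)]
    ring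
  have hRHS : ε * (α - α^2) * 2^(2*r) = ε * (2^r * N - N^2) := by
    rw [hαN, h2r]; field_simp
  rw [hdiff, hRHS]
  have habs : |(2^r : ℝ)⁻¹ * ∑ γ ∈ Finset.univ.erase (0 : Fin r → ZMod 2), (F γ)^3|
      ≤ (2^r : ℝ)⁻¹ * ∑ γ ∈ Finset.univ.erase (0 : Fin r → ZMod 2), ε * 2^r * (F γ)^2 := by
    rw [abs_mul, abs_of_nonneg (by positivity : (0:ℝ) ≤ (2^r : ℝ)⁻¹)]
    gcongr
    calc |∑ γ ∈ Finset.univ.erase (0 : Fin r → ZMod 2), (F γ)^3|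
        ≤ ∑ γ ∈ Finset.univ.erase (0 : Fin r → ZMod 2), |(F γ)^3| :=
          Finset.abs_sum_le_sum_abs _ _
      _ ≤ ∑ γ ∈ Finset.univ.erase (0 : Fin r → ZMod 2), ε * 2^r * (F γ)^2 := by
          refine Finset.sum_le_sum fun γ hγ => ?_
          have hγ0 : γ ≠ 0 := Finset.ne_of_mem_erase hγ
          have h1 : |(F γ)^3| = |F γ| * (F γ)^2 := by
            rw [pow_succ, abs_mul, abs_pow, sq_abs]
            ring
          rw [h1]
          have := hFb γ hγ0
          nlinarith [sq_nonneg (F γ), abs_nonneg (F γ)]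
  refine habs.trans ?_
  rw [← Finset.mul_sum, hPar']
  rw [show (2^r : ℝ)⁻¹ * (ε * 2^r * (2^r * N - N^2)) = ε * (2^r * N - N^2) * ((2^r : ℝ)⁻¹ * 2^r) by ring]
  rw [inv_mul_cancel₀ (ne_of_gt hpow), mul_one]
end

section
/- Let r ≥ n ≥ 3, let E ⊆ GF(2)^r \ {0} be PG(n−1,2)-free with |E| > (1 − 3/2^n)·2^r, and let H be any linear hyperplane of GF(2)^r. Then E spans GF(2)^r and E ∩ H spans H; in particular E ∩ H, viewed as a restriction of E, is a hyperplane of the matroid represented by E. -/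
open Module Submodule

section Helpers

variable {V : Type*} [AddCommGroup V] [Module (ZMod 2) V] [FiniteDimensional (ZMod 2) V]

lemma card_submodule' (K : Submodule (ZMod 2) V) :
    (K : Set V).ncard = 2 ^ finrank (ZMod 2) K := by
  have h1 : Finite K := Module.finite_of_finite (ZMod 2)
  have h2 : Fintype K := Fintype.ofFinite K
  rw [← Nat.card_coe_set_eq, Nat.card_eq_fintype_card]
  have := card_eq_pow_finrank (K := ZMod 2) (V := K)
  rwa [ZMod.card] at this

lemma finrank_map_mkQ' (W K : Submodule (ZMod 2) V) (hWK : W ≤ K) :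
    finrank (ZMod 2) (K.map W.mkQ) = finrank (ZMod 2) K - finrank (ZMod 2) W := by
  have hrn := LinearMap.finrank_range_add_finrank_ker (W.mkQ ∘ₗ K.subtype)
  have hr : LinearMap.range (W.mkQ ∘ₗ K.subtype) = K.map W.mkQ := by
    rw [LinearMap.range_comp, Submodule.range_subtype]
  have hk : LinearMap.ker (W.mkQ ∘ₗ K.subtype) = W.comap K.subtype := by
    rw [LinearMap.ker_comp, Submodule.ker_mkQ]
  have he : finrank (ZMod 2) (W.comap K.subtype) = finrank (ZMod 2) W :=
    (Submodule.comapSubtypeEquivOfLe hWK).finrank_eq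
  rw [hr, hk, he] at hrn
  omega

lemma hfinV : Finite V := Module.finite_of_finite (ZMod 2)

lemma count_lemma1 (W K : Submodule (ZMod 2) V) (hWK : W ≤ K) (T : Set V)
    (hT : ∀ x ∈ K, ∃ t ∈ T, x - t ∈ W) :
    2 ^ (finrank (ZMod 2) K - finrank (ZMod 2) W) ≤ T.ncard := by
  have : Finite V := hfinV
  have hsub : W.mkQ '' (K : Set V) ⊆ W.mkQ '' T := by
    rintro _ ⟨x, hx, rfl⟩
    obtain ⟨t, ht, hw⟩ := hT x hx
    exact ⟨t, ht, ((Submodule.Quotient.eq W).mpr hw).symm⟩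
  have h1 : (W.mkQ '' (K : Set V)).ncard = 2 ^ (finrank (ZMod 2) K - finrank (ZMod 2) W) := by
    rw [← Submodule.map_coe, card_submodule', finrank_map_mkQ' W K hWK]
  calc 2 ^ (finrank (ZMod 2) K - finrank (ZMod 2) W)
      = (W.mkQ '' (K : Set V)).ncard := h1.symm
    _ ≤ (W.mkQ '' T).ncard := Set.ncard_le_ncard hsub (Set.toFinite _)
    _ ≤ T.ncard := Set.ncard_image_le (Set.toFinite _)

lemma count_lemma2 (W Hp : Submodule (ZMod 2) V) (hWH : W ≤ Hp) (x₀ : V) (hx₀ : x₀ ∉ Hp)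
    (T : Set V) (hT : ∀ x, x ∉ Hp → ∃ t ∈ T, x - t ∈ W) :
    2 ^ (finrank (ZMod 2) Hp - finrank (ZMod 2) W) ≤ T.ncard := by
  have : Finite V := hfinV
  have hsub : (fun y => W.mkQ x₀ + y) '' (W.mkQ '' (Hp : Set V)) ⊆ W.mkQ '' T := by
    rintro _ ⟨_, ⟨h, hh, rfl⟩, rfl⟩
    have hx : x₀ + h ∉ Hp := fun hc => hx₀ (by simpa using Hp.sub_mem hc hh)
    obtain ⟨t, ht, hw⟩ := hT _ hx
    refine ⟨t, ht, ?_⟩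
    have h2 := ((Submodule.Quotient.eq W).mpr hw).symm
    show W.mkQ t = W.mkQ x₀ + W.mkQ h
    rw [← map_add]
    exact h2
  have h1 : ((fun y => W.mkQ x₀ + y) '' (W.mkQ '' (Hp : Set V))).ncard
      = 2 ^ (finrank (ZMod 2) Hp - finrank (ZMod 2) W) := by
    rw [Set.ncard_image_of_injective _ (add_right_injective _), ← Submodule.map_coe,
      card_submodule', finrank_map_mkQ' W Hp hWH]
  calc 2 ^ (finrank (ZMod 2) Hp - finrank (ZMod 2) W)
      = ((fun y => W.mkQ x₀ + y) '' (W.mkQ '' (Hp : Set V))).ncard := h1.symm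
    _ ≤ (W.mkQ '' T).ncard := Set.ncard_le_ncard hsub (Set.toFinite _)
    _ ≤ T.ncard := Set.ncard_image_le (Set.toFinite _)

end Helpers

theorem stmt_16 (r n : ℕ) (hn : 3 ≤ n) (hr : n ≤ r)
    (E : Set (Fin r → ZMod 2)) (h0 : (0 : Fin r → ZMod 2) ∉ E)
    (hfree : ¬ ∃ W : Submodule (ZMod 2) (Fin r → ZMod 2),
      Module.finrank (ZMod 2) W = n ∧ ∀ x ∈ W, x ≠ 0 → x ∈ E)
    (hcard : (1 - 3 / 2^n : ℝ) * 2^r < (E.ncard : ℝ))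
    (H : Submodule (ZMod 2) (Fin r → ZMod 2))
    (hH : Module.finrank (ZMod 2) H = r - 1) :
    Submodule.span (ZMod 2) E = ⊤ ∧
    Submodule.span (ZMod 2) (E ∩ (H : Set (Fin r → ZMod 2))) = H := by
  classical
  have hrV : finrank (ZMod 2) (Fin r → ZMod 2) = r := Module.finrank_fin_fun (ZMod 2)
  -- numeric bridge
  have hnat : ¬ (E.ncard + 3 * 2 ^ (r - n) ≤ 2 ^ r) := by
    intro hle
    have hpow : (2:ℝ) ^ r = 2 ^ n * 2 ^ (r - n) := by
      rw [← pow_add]; congr 1; omega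
    have h2n : (2:ℝ) ^ n ≠ 0 := by positivity
    have heq : (1 - 3 / 2 ^ n : ℝ) * 2 ^ r = 2 ^ r - 3 * 2 ^ (r - n) := by
      field_simp
      rw [hpow]; ring
    rw [heq] at hcard
    have hle' : (E.ncard : ℝ) + 3 * 2 ^ (r - n) ≤ 2 ^ r := by exact_mod_cast hle
    linarith
  -- helper numeric facts
  have e5 : 2 * 2 ^ (r - n) ≤ 2 ^ (r - 2) := by
    calc 2 * 2 ^ (r - n) = 2 ^ (r - n + 1) := by rw [pow_succ]; ring
      _ ≤ 2 ^ (r - 2) := Nat.pow_le_pow_right (by norm_num) (by omega)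
  have e6 : (2:ℕ) ^ (r - 2) + 2 ^ (r - 2) = 2 ^ (r - 1) := by
    rw [← two_mul, ← pow_succ']
    congr 1; omega
  have e7 : (2:ℕ) ^ (r - 1) + 2 ^ (r - 1) = 2 ^ r := by
    rw [← two_mul, ← pow_succ']
    congr 1; omega
  -- Part 1 : E spans
  have hspan : Submodule.span (ZMod 2) E = ⊤ := by
    by_contra hne
    have hlt : Submodule.span (ZMod 2) E < ⊤ := lt_top_iff_ne_top.mpr hne
    have hd : finrank (ZMod 2) (Submodule.span (ZMod 2) E) < r := by
      have := Submodule.finrank_lt_finrank_of_lt hlt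
      rwa [finrank_top, hrV] at this
    have hce : E.ncard ≤ 2 ^ finrank (ZMod 2) (Submodule.span (ZMod 2) E) := by
      rw [← card_submodule']
      exact Set.ncard_le_ncard Submodule.subset_span (Set.toFinite _)
    apply hnat
    have h1 : (2:ℕ) ^ finrank (ZMod 2) (Submodule.span (ZMod 2) E) ≤ 2 ^ (r-1) :=
      Nat.pow_le_pow_right (by norm_num) (by omega)
    have h2 : 3 * 2 ^ (r - n) ≤ 2 ^ (r - 1) := by
      calc 3 * 2 ^ (r-n) ≤ 2 * 2 ^ (r-n) + 2 ^ (r-n) := by omega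
        _ ≤ 2 ^ (r-2) + 2 ^ (r-2) := by
            have : (2:ℕ) ^ (r-n) ≤ 2 ^ (r-2) := Nat.pow_le_pow_right (by norm_num) (by omega)
            omega
        _ = 2 ^ (r-1) := e6
    omega
  refine ⟨hspan, ?_⟩
  by_contra hne
  set K := Submodule.span (ZMod 2) (E ∩ (H : Set (Fin r → ZMod 2))) with hKdef
  have hKle : K ≤ H := Submodule.span_le.mpr Set.inter_subset_right
  have hKlt : K < H := hKle.lt_of_ne hne
  have hdK : finrank (ZMod 2) K < r - 1 := by
    have := Submodule.finrank_lt_finrank_of_lt hKlt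
    rwa [hH] at this
  -- maximal full subspace of H with finrank ≤ n - 1
  set A : Set ℕ := {k | ∃ W : Submodule (ZMod 2) (Fin r → ZMod 2),
      W ≤ H ∧ (∀ y ∈ W, y ≠ 0 → y ∈ E) ∧ finrank (ZMod 2) W = k ∧ k ≤ n - 1} with hAdef
  have hA0 : 0 ∈ A := ⟨⊥, bot_le,
    by intro y hy hy0; rw [Submodule.mem_bot] at hy; exact absurd hy hy0,
    finrank_bot _ _, by omega⟩
  have hAbdd : BddAbove A := ⟨n - 1, fun k hk => by
    obtain ⟨W, -, -, -, h⟩ := hk; exact h⟩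
  set k₀ := sSup A with hk₀def
  obtain ⟨W, hWH, hWfull, hWk, hWkn⟩ := Nat.sSup_mem ⟨0, hA0⟩ hAbdd
  rw [show sSup A = k₀ from hk₀def.symm] at hWk hWkn
  -- extension lemma
  have hext : ∀ x, x ∉ W → (k₀ = n - 1 ∨ x ∈ H) →
      ∃ y, y ∉ E ∧ y ≠ 0 ∧ x - y ∈ W := by
    intro x hxW hcase
    have hx0 : x ≠ 0 := fun h => hxW (h ▸ W.zero_mem)
    set W' := W ⊔ Submodule.span (ZMod 2) {x} with hW'def
    have hxW' : x ∈ W' := Submodule.mem_sup_right (Submodule.mem_span_singleton_self x)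
    have hltW : W < W' := lt_of_le_of_ne le_sup_left (fun h => hxW (h ▸ hxW'))
    have hfr_lt : k₀ < finrank (ZMod 2) W' := hWk ▸ Submodule.finrank_lt_finrank_of_lt hltW
    have hfr_le : finrank (ZMod 2) W' ≤ k₀ + 1 := by
      have h1 := Submodule.finrank_sup_add_finrank_inf_eq W (Submodule.span (ZMod 2) {x})
      rw [← hW'def, hWk, finrank_span_singleton hx0] at h1
      omega
    have hfr : finrank (ZMod 2) W' = k₀ + 1 := by omega
    have hnotfull : ¬ (∀ y ∈ W', y ≠ 0 → y ∈ E) := by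
      intro hfull
      rcases hcase with hk | hxH
      · exact hfree ⟨W', by omega, hfull⟩
      · rcases Nat.lt_or_ge k₀ (n-1) with h | h
        · have hW'H : W' ≤ H := sup_le hWH ((Submodule.span_le).mpr (by simpa using hxH))
          have hmem : k₀ + 1 ∈ A := ⟨W', hW'H, hfull, hfr, by omega⟩
          have := le_csSup hAbdd hmem
          omega
        · have hk : k₀ = n - 1 := by omega
          exact hfree ⟨W', by omega, hfull⟩
    push_neg at hnotfull
    obtain ⟨y, hyW', hy0, hyE⟩ := hnotfull
    obtain ⟨w, hw, z, hz, hyzw⟩ := Submodule.mem_sup.mp hyW'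
    obtain ⟨c, rfl⟩ := Submodule.mem_span_singleton.mp hz
    have hc : c = 0 ∨ c = 1 := by
      have : ∀ c : ZMod 2, c = 0 ∨ c = 1 := by decide
      exact this c
    rcases hc with rfl | rfl
    · exfalso
      apply hyE
      apply hWfull y _ hy0
      rw [← hyzw]; simpa using hw
    · refine ⟨y, hyE, hy0, ?_⟩
      have : x - y = -w := by rw [← hyzw]; rw [one_smul]; abel
      rw [this]
      exact W.neg_mem hw
  have hWK : W ≤ K := by
    intro y hy
    by_cases hy0 : y = 0
    · rw [hy0]; exact K.zero_mem
    · exact Submodule.subset_span ⟨hWfull y hy hy0, hWH hy⟩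
  have hkd : k₀ ≤ finrank (ZMod 2) K := hWk ▸ Submodule.finrank_mono hWK
  have hEsplit : E.ncard = (E ∩ ↑H).ncard + (E \ ↑H).ncard :=
    (Set.ncard_inter_add_ncard_diff_eq_ncard E ↑H (Set.toFinite _)).symm
  have hcardV : Nat.card (Fin r → ZMod 2) = 2 ^ r := by
    have := card_submodule' (⊤ : Submodule (ZMod 2) (Fin r → ZMod 2))
    rw [Submodule.top_coe, Set.ncard_univ, finrank_top, hrV] at this
    exact this
  have hcomplH : ((↑H : Set (Fin r → ZMod 2))ᶜ).ncard + 2 ^ (r-1) = 2 ^ r := by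
    have h1 := Set.ncard_add_ncard_compl (↑H : Set (Fin r → ZMod 2))
    rw [card_submodule' H, hH, hcardV] at h1
    omega
  -- count holes in K
  have hcount1 : (E ∩ ↑H).ncard + 2 ^ (finrank (ZMod 2) K - k₀) ≤ 2 ^ finrank (ZMod 2) K := by
    have hholes : ∀ x ∈ K, ∃ t ∈ (↑K : Set (Fin r → ZMod 2)) \ E, x - t ∈ W := by
      intro x hx
      by_cases hxW : x ∈ W
      · exact ⟨0, ⟨K.zero_mem, h0⟩, by simpa using hxW⟩
      · obtain ⟨y, hyE, hy0, hyW⟩ := hext x hxW (Or.inr (hKle hx))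
        have hyK : y ∈ K := by
          have h : x - (x - y) = y := by abel
          exact h ▸ K.sub_mem hx (hWK hyW)
        exact ⟨y, ⟨hyK, hyE⟩, hyW⟩
    have hc := count_lemma1 W K hWK _ hholes
    rw [hWk] at hc
    have hdisj : Disjoint (E ∩ ↑H) ((↑K : Set (Fin r → ZMod 2)) \ E) :=
      Set.disjoint_left.mpr (fun a ha hb => hb.2 ha.1)
    have hun : (E ∩ ↑H) ∪ ((↑K : Set (Fin r → ZMod 2)) \ E) ⊆ (↑K : Set (Fin r → ZMod 2)) := by
      rintro a (ha | ha)
      exacts [Submodule.subset_span ha, ha.1]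
    have h2 : (E ∩ ↑H).ncard + ((↑K : Set (Fin r → ZMod 2)) \ E).ncard ≤ 2 ^ finrank (ZMod 2) K := by
      rw [← Set.ncard_union_eq hdisj (Set.toFinite _) (Set.toFinite _), ← card_submodule' K]
      exact Set.ncard_le_ncard hun (Set.toFinite _)
    omega
  rcases Nat.lt_or_ge k₀ (n-1) with hkc | hkc
  · -- k₀ ≤ n - 2
    have hcomp : (E \ ↑H).ncard + 2 ^ (r-1) ≤ 2 ^ r := by
      have h4 : (E \ ↑H).ncard ≤ ((↑H : Set (Fin r → ZMod 2))ᶜ).ncard :=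
        Set.ncard_le_ncard (fun a ha => ha.2) (Set.toFinite _)
      omega
    apply hnat
    set d := finrank (ZMod 2) K with hddef
    have hm : ((E ∩ ↑H).ncard + 2 ^ (d - k₀)) * 2 ^ (r-2-d) ≤ 2 ^ d * 2 ^ (r-2-d) :=
      Nat.mul_le_mul_right _ hcount1
    have e1 : (2:ℕ) ^ (d - k₀) * 2 ^ (r-2-d) = 2 ^ (r-2-k₀) := by
      rw [← pow_add]; congr 1; omega
    have e2 : (2:ℕ) ^ d * 2 ^ (r-2-d) = 2 ^ (r-2) := by
      rw [← pow_add]; congr 1; omega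
    rw [add_mul, e1, e2] at hm
    have e3 : (2:ℕ) ^ (r-n) ≤ 2 ^ (r-2-k₀) := Nat.pow_le_pow_right (by norm_num) (by omega)
    have e4 : (E ∩ ↑H).ncard ≤ (E ∩ ↑H).ncard * 2 ^ (r-2-d) :=
      Nat.le_mul_of_pos_right _ (Nat.pow_pos (by norm_num))
    have hb1 : (E ∩ ↑H).ncard + 2 ^ (r-n) ≤ 2 ^ (r-2) := by linarith
    linarith [hEsplit, hb1, hcomp, e5, e6, e7]
  · -- k₀ = n - 1
    have hk₀ : k₀ = n - 1 := by omega
    have hx₀ : ∃ x₀, x₀ ∉ H := by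
      by_contra hall
      push_neg at hall
      have : H = ⊤ := Submodule.eq_top_iff'.mpr hall
      rw [this, finrank_top, hrV] at hH
      omega
    obtain ⟨x₀, hx₀⟩ := hx₀
    have hcount2 : (E \ ↑H).ncard + 2 ^ (r-n) + 2 ^ (r-1) ≤ 2 ^ r := by
      have hT : ∀ x, x ∉ H → ∃ t ∈ (↑H : Set (Fin r → ZMod 2))ᶜ \ E, x - t ∈ W := by
        intro x hx
        have hxW : x ∉ W := fun h => hx (hWH h)
        obtain ⟨y, hyE, hy0, hyW⟩ := hext x hxW (Or.inl hk₀)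
        have hyH : y ∉ H := by
          intro hy
          apply hx
          have h : x = y + (x - y) := by abel
          rw [h]
          exact H.add_mem hy (hWH hyW)
        exact ⟨y, ⟨hyH, hyE⟩, hyW⟩
      have hc := count_lemma2 W H hWH x₀ hx₀ _ hT
      rw [hH, hWk] at hc
      have hexp : r - 1 - k₀ = r - n := by omega
      rw [hexp] at hc
      have hdisj : Disjoint (E \ ↑H) ((↑H : Set (Fin r → ZMod 2))ᶜ \ E) :=
        Set.disjoint_left.mpr (fun a ha hb => hb.2 ha.1)
      have hun : (E \ ↑H) ∪ ((↑H : Set (Fin r → ZMod 2))ᶜ \ E) ⊆ (↑H : Set (Fin r → ZMod 2))ᶜ := by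
        rintro a (ha | ha)
        exacts [ha.2, ha.1]
      have h2 : (E \ ↑H).ncard + ((↑H : Set (Fin r → ZMod 2))ᶜ \ E).ncard
          ≤ ((↑H : Set (Fin r → ZMod 2))ᶜ).ncard := by
        rw [← Set.ncard_union_eq hdisj (Set.toFinite _) (Set.toFinite _)]
        exact Set.ncard_le_ncard hun (Set.toFinite _)
      omega
    have hb1 : (E ∩ ↑H).ncard ≤ 2 ^ (r-2) := by
      calc (E ∩ ↑H).ncard ≤ (↑K : Set (Fin r → ZMod 2)).ncard :=
            Set.ncard_le_ncard Submodule.subset_span (Set.toFinite _)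
        _ = 2 ^ finrank (ZMod 2) K := card_submodule' K
        _ ≤ 2 ^ (r-2) := Nat.pow_le_pow_right (by norm_num) (by omega)
    apply hnat
    linarith [hEsplit, hb1, hcount2, e5, e6, e7]
end
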